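/- Let A be an n×n pairwise comparison matrix (n ≥ 3) and w a positive weight vector that is strongly inefficient for A. Then there exists a positive weight vector x* that is weakly efficient for A and internally and strictly dominates w, i.e., for all i ≠ j: a_ij ≤ w_i/w_j implies a_ij ≤ x*_i/x*_j < w_i/w_j, and a_ij ≥ w_i/w_j implies a_ij ≥ x*_i/x*_j > w_i/w_j. -/

import Mathlib

/-!
Moving `w` a small step along the geometric path `t ↦ w ^ (1 - t) * w' ^ t` towards a dominating
vector `w'` gives a positive `v` each of whose ratios `v i / v j` lies strictly between
`w i / w j` and `A i j` (or at `A i j`). Normalise at one index and consider the vectors whose ratios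
lie weakly between `A i j` and `v i / v j`: this set is compact, so it contains a minimiser `x` of
the total deviation `∑ |A i j - x i / x j|`. Were `x` dominated, the same small geometric step from
`x` would stay in the set and strictly lower the deviation; hence `x` is weakly efficient. Its
ratios lie between `A` and those of `v`, so it dominates `w` internally and strictly.
-/

open Filter Topology Set

variable {ι : Type*}

/-- `r` is strictly closer to `c` than `a` is, on the same side of `c` (it may reach `c`). -/
def InternallyCloser (c a r : ℝ) : Prop :=
  (c ≤ a → c ≤ r ∧ r < a) ∧ (c ≥ a → c ≥ r ∧ r > a)

namespace InternallyCloser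

variable {a b c r : ℝ}

theorem mem_uIcc (h : InternallyCloser c a r) : r ∈ uIcc c a := by
  rcases le_total c a with hca | hac
  · exact Set.mem_uIcc.2 (Or.inl ⟨(h.1 hca).1, (h.1 hca).2.le⟩)
  · exact Set.mem_uIcc.2 (Or.inr ⟨(h.2 hac).2.le, (h.2 hac).1⟩)

theorem abs_sub_lt (h : InternallyCloser c a r) : |c - r| < |c - a| := by
  rcases le_total c a with hca | hac
  · obtain ⟨hcr, hra⟩ := h.1 hca
    rw [abs_of_nonpos (sub_nonpos.2 hcr), abs_of_nonpos (sub_nonpos.2 hca)]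
    linarith
  · obtain ⟨hrc, har⟩ := h.2 hac
    rw [abs_of_nonneg (sub_nonneg.2 hrc), abs_of_nonneg (sub_nonneg.2 hac)]
    linarith

theorem of_mem_uIcc (h : InternallyCloser c a b) (hr : r ∈ uIcc c b) : InternallyCloser c a r := by
  rcases le_total c a with hca | hac
  · obtain ⟨hcb, hba⟩ := h.1 hca
    rw [uIcc_of_le hcb] at hr
    exact ⟨fun _ => ⟨hr.1, hr.2.trans_lt hba⟩, fun hac => absurd (le_trans hac hcb) hba.not_ge⟩
  · obtain ⟨hbc, hab⟩ := h.2 hac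
    rw [uIcc_of_ge hbc] at hr
    exact ⟨fun hca => absurd (le_trans hbc hca) hab.not_ge, fun _ => ⟨hr.2, hab.trans_le hr.1⟩⟩

end InternallyCloser

theorem eventually_internallyCloser_mul_rpow {a b c : ℝ} (ha : 0 < a) (hb : 0 < b)
    (h : |c - b| < |c - a|) : ∀ᶠ t in 𝓝[>] (0 : ℝ), InternallyCloser c a (a * (b / a) ^ t) := by
  have hlim : Tendsto (fun t : ℝ => a * (b / a) ^ t) (𝓝[>] 0) (𝓝 a) := by
    have hcont : Continuous fun t : ℝ => a * (b / a) ^ t :=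
      continuous_const.mul (Real.continuous_const_rpow (by positivity))
    simpa using (hcont.tendsto 0).mono_left nhdsWithin_le_nhds
  rcases lt_trichotomy c a with hca | rfl | hac
  · have hba : b < a := by
      rw [abs_of_neg (sub_neg.2 hca)] at h
      linarith [neg_abs_le (c - b)]
    filter_upwards [hlim.eventually_const_lt hca, self_mem_nhdsWithin] with t hct ht
    refine ⟨fun _ => ⟨hct.le, mul_lt_of_lt_one_right ha ?_⟩, fun hac => absurd hac hca.not_ge⟩
    exact Real.rpow_lt_one (by positivity) ((div_lt_one ha).2 hba) ht
  · exact absurd (h.trans_eq (by simp)) (abs_nonneg _).not_gt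
  · have hab : a < b := by
      rw [abs_of_pos (sub_pos.2 hac)] at h
      linarith [le_abs_self (c - b)]
    filter_upwards [hlim.eventually_lt_const hac, self_mem_nhdsWithin] with t htc ht
    refine ⟨fun hca => absurd hca hac.not_ge, fun _ => ⟨htc.le, lt_mul_of_one_lt_right ha ?_⟩⟩
    exact Real.one_lt_rpow ((one_lt_div ha).2 hab) ht

theorem mul_rpow_div_mul_rpow {p q r s : ℝ} (hp : 0 < p) (hq : 0 < q) (hr : 0 < r) (hs : 0 < s)
    (t : ℝ) : p * (q / p) ^ t / (r * (s / r) ^ t) = p / r * ((q / s) / (p / r)) ^ t := by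
  rw [mul_div_mul_comm, ← Real.div_rpow (div_pos hq hp).le (div_pos hs hr).le, div_div_div_comm]

def Dominates (A : Matrix ι ι ℝ) (y x : ι → ℝ) : Prop :=
  ∀ i j, i ≠ j → |A i j - y i / y j| < |A i j - x i / x j|

def IsStronglyInefficient (A : Matrix ι ι ℝ) (x : ι → ℝ) : Prop :=
  ∃ y : ι → ℝ, (∀ i, 0 < y i) ∧ Dominates A y x

def InternallyStrictlyDominates (A : Matrix ι ι ℝ) (y x : ι → ℝ) : Prop :=
  ∀ i j, i ≠ j → InternallyCloser (A i j) (x i / x j) (y i / y j)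

theorem exists_internallyStrictlyDominates [Finite ι] {A : Matrix ι ι ℝ} {x y : ι → ℝ}
    (hx : ∀ i, 0 < x i) (hy : ∀ i, 0 < y i) (hyx : Dominates A y x) :
    ∃ z : ι → ℝ, (∀ i, 0 < z i) ∧ InternallyStrictlyDominates A z x := by
  have hev : ∀ᶠ t in 𝓝[>] (0 : ℝ), ∀ i j, i ≠ j →
      InternallyCloser (A i j) (x i / x j) (x i / x j * ((y i / y j) / (x i / x j)) ^ t) :=
    eventually_all.2 fun i => eventually_all.2 fun j => eventually_imp_distrib_left.2 fun hij =>
      eventually_internallyCloser_mul_rpow (div_pos (hx i) (hx j)) (div_pos (hy i) (hy j))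
        (hyx i j hij)
  obtain ⟨t, ht⟩ := hev.exists
  refine ⟨fun i => x i * (y i / x i) ^ t,
    fun i => mul_pos (hx i) (Real.rpow_pos_of_pos (div_pos (hy i) (hx i)) t), fun i j hij => ?_⟩
  rw [mul_rpow_div_mul_rpow (hx i) (hy i) (hx j) (hy j)]
  exact ht i j hij

/-- The ratios `x i / x j` lie between `A i j` and `B i j`; denominators are cleared so that the
set is closed. -/
def ratioRegion (A B : Matrix ι ι ℝ) (i₀ : ι) : Set (ι → ℝ) :=
  {x | x i₀ = 1 ∧ ∀ i j, i ≠ j → x i ∈ uIcc (A i j * x j) (B i j * x j)}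

section ratioRegion

variable {A B : Matrix ι ι ℝ} {i₀ : ι} {x : ι → ℝ}

theorem ratio_mem_uIcc_of_mem_ratioRegion (hx : x ∈ ratioRegion A B i₀) {i j : ι}
    (hxj : x j ≠ 0) (hij : i ≠ j) : x i / x j ∈ uIcc (A i j) (B i j) := by
  rw [← mem_preimage (f := fun r => r / x j), preimage_div_const_uIcc hxj]
  exact hx.2 i j hij

theorem mem_ratioRegion_of_ratio_mem_uIcc {z : ι → ℝ} (hz : ∀ i, z i ≠ 0)
    (h : ∀ i j, i ≠ j → z i / z j ∈ uIcc (A i j) (B i j)) :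
    (fun i => z i / z i₀) ∈ ratioRegion A B i₀ := by
  refine ⟨div_self (hz i₀), fun i j hij => ?_⟩
  rw [← preimage_div_const_uIcc (div_ne_zero (hz j) (hz i₀)), mem_preimage,
    div_div_div_cancel_right₀ (hz i₀)]
  exact h i j hij

theorem pos_of_mem_ratioRegion (hA : ∀ i j, 0 < A i j) (hB : ∀ i j, 0 < B i j)
    (hx : x ∈ ratioRegion A B i₀) (i : ι) : 0 < x i := by
  by_cases hi : i = i₀
  · simp [hi, hx.1]
  · have hxi := hx.2 i i₀ hi
    rw [hx.1, mul_one, mul_one] at hxi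
    exact (lt_inf_iff.2 ⟨hA i i₀, hB i i₀⟩).trans_le hxi.1

theorem isClosed_ratioRegion (A B : Matrix ι ι ℝ) (i₀ : ι) : IsClosed (ratioRegion A B i₀) := by
  simp only [ratioRegion, uIcc, mem_Icc, ofPred_and, ofPred_forall]
  refine (isClosed_eq (continuous_apply i₀) continuous_const).inter
    (isClosed_iInter fun i => isClosed_iInter fun j => isClosed_iInter fun _ => ?_)
  exact (isClosed_le (by fun_prop) (by fun_prop)).inter (isClosed_le (by fun_prop) (by fun_prop))

theorem isCompact_ratioRegion (A B : Matrix ι ι ℝ) (i₀ : ι) [Finite ι] :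
    IsCompact (ratioRegion A B i₀) := by
  refine (isCompact_univ_pi fun i => (isCompact_uIcc (a := A i i₀) (b := B i i₀)).union
    (isCompact_singleton (x := (1 : ℝ)))).of_isClosed_subset (isClosed_ratioRegion A B i₀)
    fun x hx => mem_univ_pi.2 fun i => ?_
  by_cases hi : i = i₀
  · exact Or.inr (hi ▸ hx.1)
  · exact Or.inl (by simpa only [hx.1, mul_one] using hx.2 i i₀ hi)

end ratioRegion

section deviation

variable [Fintype ι]

/-- The diagonal terms are included: they are constant on vectors with nonzero entries. -/
noncomputable def deviation (A : Matrix ι ι ℝ) (x : ι → ℝ) : ℝ :=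
  ∑ p : ι × ι, |A p.1 p.2 - x p.1 / x p.2|

theorem continuousOn_deviation (A : Matrix ι ι ℝ) :
    ContinuousOn (deviation A) {x | ∀ i, x i ≠ 0} := by
  unfold deviation
  fun_prop (disch := intro x hx; exact hx _)

theorem deviation_lt_of_dominates [Nontrivial ι] {A : Matrix ι ι ℝ} {x y : ι → ℝ}
    (hx : ∀ i, x i ≠ 0) (hy : ∀ i, y i ≠ 0) (hyx : Dominates A y x) :
    deviation A y < deviation A x := by
  refine Finset.sum_lt_sum (fun p _ => ?_) ?_
  · rcases eq_or_ne p.1 p.2 with hp | hp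
    · rw [hp, div_self (hx _), div_self (hy _)]
    · exact (hyx _ _ hp).le
  · obtain ⟨i, j, hij⟩ := exists_pair_ne ι
    exact ⟨(i, j), Finset.mem_univ _, hyx i j hij⟩

theorem exists_mem_ratioRegion_not_isStronglyInefficient [Nontrivial ι] {A B : Matrix ι ι ℝ}
    {i₀ : ι} (hA : ∀ i j, 0 < A i j) (hB : ∀ i j, 0 < B i j)
    (hne : (ratioRegion A B i₀).Nonempty) :
    ∃ x ∈ ratioRegion A B i₀, ¬ IsStronglyInefficient A x := by
  obtain ⟨x, hxK, hmin⟩ := (isCompact_ratioRegion A B i₀).exists_isMinOn hne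
    ((continuousOn_deviation A).mono fun x hx i => (pos_of_mem_ratioRegion hA hB hx i).ne')
  refine ⟨x, hxK, fun ⟨y, hy, hyx⟩ => ?_⟩
  have hx := pos_of_mem_ratioRegion hA hB hxK
  obtain ⟨z, hz, hzx⟩ := exists_internallyStrictlyDominates hx hy hyx
  have hzK : (fun i => z i / z i₀) ∈ ratioRegion A B i₀ :=
    mem_ratioRegion_of_ratio_mem_uIcc (fun i => (hz i).ne') fun i j hij =>
      uIcc_subset_uIcc_left (ratio_mem_uIcc_of_mem_ratioRegion hxK (hx j).ne' hij)
        (hzx i j hij).mem_uIcc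
  have hlt : deviation A (fun i => z i / z i₀) < deviation A x :=
    deviation_lt_of_dominates (fun i => (hx i).ne') (fun i => div_ne_zero (hz i).ne' (hz i₀).ne')
      fun i j hij => by
        simpa only [div_div_div_cancel_right₀ (hz i₀).ne'] using (hzx i j hij).abs_sub_lt
  exact (hmin hzK).not_gt hlt

end deviation

theorem strongly_inefficient_has_weakly_efficient_dominator_general
    {n : ℕ} (hn : 3 ≤ n) (A : Matrix (Fin n) (Fin n) ℝ)
    (hApos : ∀ i j, 0 < A i j)
    (w : Fin n → ℝ) (hw : ∀ i, 0 < w i)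
    (hineff : ∃ w' : Fin n → ℝ, (∀ i, 0 < w' i) ∧
        (∀ i j, i ≠ j → |A i j - w' i / w' j| < |A i j - w i / w j|)) :
    ∃ xs : Fin n → ℝ, (∀ i, 0 < xs i) ∧
      -- xs is weakly efficient for A
      (¬ ∃ w' : Fin n → ℝ, (∀ i, 0 < w' i) ∧
        (∀ i j, i ≠ j → |A i j - w' i / w' j| < |A i j - xs i / xs j|)) ∧
      -- xs internally and strictly dominates w
      (∀ i j, i ≠ j →
        (A i j ≤ w i / w j → A i j ≤ xs i / xs j ∧ xs i / xs j < w i / w j) ∧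
        (A i j ≥ w i / w j → A i j ≥ xs i / xs j ∧ xs i / xs j > w i / w j)) := by
  have : Nontrivial (Fin n) := Fin.nontrivial_iff_two_le.2 (by omega)
  obtain ⟨w', hw', hw'w⟩ := hineff
  obtain ⟨v, hv, hvw⟩ := exists_internallyStrictlyDominates hw hw' hw'w
  have hB : ∀ i j, 0 < v i / v j := fun i j => div_pos (hv i) (hv j)
  have i₀ : Fin n := ⟨0, by omega⟩
  obtain ⟨x, hxK, hx⟩ := exists_mem_ratioRegion_not_isStronglyInefficient (i₀ := i₀) hApos hB
    ⟨_, mem_ratioRegion_of_ratio_mem_uIcc (fun i => (hv i).ne') fun _ _ _ => right_mem_uIcc⟩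
  have hxpos := pos_of_mem_ratioRegion hApos hB hxK
  exact ⟨x, hxpos, hx, fun i j hij =>
    (hvw i j hij).of_mem_uIcc (ratio_mem_uIcc_of_mem_ratioRegion hxK (hxpos j).ne' hij)⟩

/-- If `w` is strongly inefficient, then there is a weakly efficient
positive weight vector `x*` that internally and strictly dominates `w`. -/
theorem strongly_inefficient_has_weakly_efficient_dominator
    {n : ℕ} (hn : 3 ≤ n) (A : Matrix (Fin n) (Fin n) ℝ)
    (hApos : ∀ i j, 0 < A i j) (hArec : ∀ i j, A i j = (A j i)⁻¹)
    (w : Fin n → ℝ) (hw : ∀ i, 0 < w i)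
    (hineff : ∃ w' : Fin n → ℝ, (∀ i, 0 < w' i) ∧
        (∀ i j, i ≠ j → |A i j - w' i / w' j| < |A i j - w i / w j|)) :
    ∃ xs : Fin n → ℝ, (∀ i, 0 < xs i) ∧
      -- xs is weakly efficient for A
      (¬ ∃ w' : Fin n → ℝ, (∀ i, 0 < w' i) ∧
        (∀ i j, i ≠ j → |A i j - w' i / w' j| < |A i j - xs i / xs j|)) ∧
      -- xs internally and strictly dominates w
      (∀ i j, i ≠ j →
        (A i j ≤ w i / w j → A i j ≤ xs i / xs j ∧ xs i / xs j < w i / w j) ∧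
        (A i j ≥ w i / w j → A i j ≥ xs i / xs j ∧ xs i / xs j > w i / w j)) :=
  strongly_inefficient_has_weakly_efficient_dominator_general hn A hApos w hw hineff
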